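/- Let β be an antisymmetric 7×7 real matrix satisfying Σ_{c,d=1}^{7} β_{cd} ψ_{cdab} = 4 β_{ab} for all a,b (i.e. β lies in the 7-dimensional module Λ²₇), and set ρ_e := (1/2) Σ_{c,d=1}^{7} β_{cd} φ_{cde}. Then for all a,b,c ∈ {1,…,7}: Σ_{d=1}^{7} β_{da} φ_{bcd} = (1/2)(Σ_{d=1}^{7} β_{db} φ_{cad} − Σ_{d=1}^{7} β_{dc} φ_{bad}) + (1/2)(δ_{ab} ρ_c − δ_{ac} ρ_b). -/
import Mathlib


noncomputable section

/-- Components of the standard associative 3-form on sorted index triples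
(0-indexed: `e^{123} ↦ (0,1,2)`, etc.). -/
def phi0 : Fin 7 → Fin 7 → Fin 7 → ℝ := fun a b c =>
  if (a, b, c) = (0, 1, 2) then 1
  else if (a, b, c) = (0, 3, 4) then 1
  else if (a, b, c) = (0, 5, 6) then 1
  else if (a, b, c) = (1, 3, 5) then 1
  else if (a, b, c) = (1, 4, 6) then -1
  else if (a, b, c) = (2, 3, 6) then -1
  else if (a, b, c) = (2, 4, 5) then -1
  else 0

/-- The totally antisymmetric components `φ_{abc}` of the standard associative 3-form
`φ = e^{123}+e^{145}+e^{167}+e^{246}−e^{257}−e^{347}−e^{356}` on `ℝ⁷`. -/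
def phi (a b c : Fin 7) : ℝ :=
  ∑ σ : Equiv.Perm (Fin 3),
    ((Equiv.Perm.sign σ : ℤ) : ℝ) * phi0 (![a, b, c] (σ 0)) (![a, b, c] (σ 1)) (![a, b, c] (σ 2))

/-- Components of the standard coassociative 4-form on sorted index quadruples. -/
def psi0 : Fin 7 → Fin 7 → Fin 7 → Fin 7 → ℝ := fun a b c d =>
  if (a, b, c, d) = (3, 4, 5, 6) then 1
  else if (a, b, c, d) = (1, 2, 5, 6) then 1
  else if (a, b, c, d) = (1, 2, 3, 4) then 1
  else if (a, b, c, d) = (0, 2, 4, 6) then 1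
  else if (a, b, c, d) = (0, 2, 3, 5) then -1
  else if (a, b, c, d) = (0, 1, 4, 5) then -1
  else if (a, b, c, d) = (0, 1, 3, 6) then -1
  else 0

/-- The totally antisymmetric components `ψ_{abcd}` of the standard coassociative 4-form
`ψ = ⋆φ = e^{4567}+e^{2367}+e^{2345}+e^{1357}−e^{1346}−e^{1256}−e^{1247}` on `ℝ⁷`. -/
def psi (a b c d : Fin 7) : ℝ :=
  ∑ σ : Equiv.Perm (Fin 4),
    ((Equiv.Perm.sign σ : ℤ) : ℝ) *
      psi0 (![a, b, c, d] (σ 0)) (![a, b, c, d] (σ 1)) (![a, b, c, d] (σ 2)) (![a, b, c, d] (σ 3))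

/-- The Kronecker delta `δ_{ab}`. -/
def delta (a b : Fin 7) : ℝ := if a = b then 1 else 0



def phi0Z : Fin 7 → Fin 7 → Fin 7 → ℤ := fun a b c =>
  if (a, b, c) = (0, 1, 2) then 1
  else if (a, b, c) = (0, 3, 4) then 1
  else if (a, b, c) = (0, 5, 6) then 1
  else if (a, b, c) = (1, 3, 5) then 1
  else if (a, b, c) = (1, 4, 6) then -1
  else if (a, b, c) = (2, 3, 6) then -1
  else if (a, b, c) = (2, 4, 5) then -1
  else 0

def psi0Z : Fin 7 → Fin 7 → Fin 7 → Fin 7 → ℤ := fun a b c d =>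
  if (a, b, c, d) = (3, 4, 5, 6) then 1
  else if (a, b, c, d) = (1, 2, 5, 6) then 1
  else if (a, b, c, d) = (1, 2, 3, 4) then 1
  else if (a, b, c, d) = (0, 2, 4, 6) then 1
  else if (a, b, c, d) = (0, 2, 3, 5) then -1
  else if (a, b, c, d) = (0, 1, 4, 5) then -1
  else if (a, b, c, d) = (0, 1, 3, 6) then -1
  else 0

def deltaZ (a b : Fin 7) : ℤ := if a = b then 1 else 0

def phiT : Fin 7 → Fin 7 → Fin 7 → ℤ := ![![![0, 0, 0, 0, 0, 0, 0], ![0, 0, 1, 0, 0, 0, 0], ![0, -1, 0, 0, 0, 0, 0], ![0, 0, 0, 0, 1, 0, 0], ![0, 0, 0, -1, 0, 0, 0], ![0, 0, 0, 0, 0, 0, 1], ![0, 0, 0, 0, 0, -1, 0]], ![![0, 0, -1, 0, 0, 0, 0], ![0, 0, 0, 0, 0, 0, 0], ![1, 0, 0, 0, 0, 0, 0], ![0, 0, 0, 0, 0, 1, 0], ![0, 0, 0, 0, 0, 0, -1], ![0, 0, 0, -1, 0, 0, 0], ![0, 0, 0, 0, 1, 0, 0]], ![![0, 1, 0, 0,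 0, 0, 0], ![-1, 0, 0, 0, 0, 0, 0], ![0, 0, 0, 0, 0, 0, 0], ![0, 0, 0, 0, 0, 0, -1], ![0, 0, 0, 0, 0, -1, 0], ![0, 0, 0, 0, 1, 0, 0], ![0, 0, 0, 1, 0, 0, 0]], ![![0, 0, 0, 0, -1, 0, 0], ![0, 0, 0, 0, 0, -1, 0], ![0, 0, 0, 0, 0, 0, 1], ![0, 0, 0, 0, 0, 0, 0], ![1, 0, 0, 0, 0, 0, 0], ![0, 1, 0, 0, 0, 0, 0], ![0, 0, -1, 0, 0, 0, 0]], ![![0, 0, 0, 1, 0, 0, 0], ![0, 0, 0, 0, 0, 0, 1], ![0, 0, 0, 0, 0, 1, 0], ![-1, 0, 0, 0, 0, 0, 0], ![0, 0, 0, 0, 0, 0, 0], ![0, 0, -1, 0, 0, 0, 0], ![0, -1, 0, 0, 0, 0, 0]], ![![0, 0, 0, 0, 0, 0, -1], ![0, 0, 0, 1, 0, 0, 0], ![0, 0, 0, 0, -1, 0, 0], ![0, -1, 0, 0, 0, 0, 0], ![0, 0, 1, 0, 0, 0, 0], ![0, 0, 0, 0, 0, 0, 0], ![1, 0, 0, 0,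 0, 0, 0]], ![![0, 0, 0, 0, 0, 1, 0], ![0, 0, 0, 0, -1, 0, 0], ![0, 0, 0, -1, 0, 0, 0], ![0, 0, 1, 0, 0, 0, 0], ![0, 1, 0, 0, 0, 0, 0], ![-1, 0, 0, 0, 0, 0, 0], ![0, 0, 0, 0, 0, 0, 0]]]

def psiT : Fin 7 → Fin 7 → Fin 7 → Fin 7 → ℤ := ![![![![0, 0, 0, 0, 0, 0, 0], ![0, 0, 0, 0, 0, 0, 0], ![0, 0, 0, 0, 0, 0, 0], ![0, 0, 0, 0, 0, 0, 0], ![0, 0, 0, 0, 0, 0, 0], ![0, 0, 0, 0, 0, 0, 0], ![0, 0, 0, 0, 0, 0, 0]], ![![0, 0, 0, 0, 0, 0, 0], ![0, 0, 0, 0, 0, 0, 0], ![0, 0, 0, 0, 0, 0, 0], ![0, 0, 0, 0, 0, 0, -1], ![0, 0, 0, 0, 0, -1, 0], ![0, 0, 0, 0, 1, 0, 0], ![0, 0, 0, 1, 0, 0, 0]], ![![0, 0, 0, 0, 0, 0, 0], ![0, 0, 0, 0, 0, 0, 0], ![0, 0, 0, 0, 0, 0, 0], ![0, 0, 0, 0,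 0, -1, 0], ![0, 0, 0, 0, 0, 0, 1], ![0, 0, 0, 1, 0, 0, 0], ![0, 0, 0, 0, -1, 0, 0]], ![![0, 0, 0, 0, 0, 0, 0], ![0, 0, 0, 0, 0, 0, 1], ![0, 0, 0, 0, 0, 1, 0], ![0, 0, 0, 0, 0, 0, 0], ![0, 0, 0, 0, 0, 0, 0], ![0, 0, -1, 0, 0, 0, 0], ![0, -1, 0, 0, 0, 0, 0]], ![![0, 0, 0, 0, 0, 0, 0], ![0, 0, 0, 0, 0, 1, 0], ![0, 0, 0, 0, 0, 0, -1], ![0, 0, 0, 0, 0, 0, 0], ![0, 0, 0, 0, 0, 0, 0], ![0, -1, 0, 0, 0, 0, 0], ![0, 0, 1, 0, 0, 0, 0]], ![![0, 0, 0, 0, 0, 0, 0], ![0, 0, 0, 0, -1, 0, 0], ![0, 0, 0, -1, 0, 0, 0], ![0, 0, 1, 0, 0, 0, 0], ![0, 1, 0, 0, 0, 0, 0], ![0, 0, 0, 0, 0, 0, 0], ![0, 0, 0, 0, 0, 0, 0]], ![![0, 0, 0, 0, 0, 0, 0], ![0, 0, 0, -1, 0, 0, 0], ![0, 0, 0, 0,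 1, 0, 0], ![0, 1, 0, 0, 0, 0, 0], ![0, 0, -1, 0, 0, 0, 0], ![0, 0, 0, 0, 0, 0, 0], ![0, 0, 0, 0, 0, 0, 0]]], ![![![0, 0, 0, 0, 0, 0, 0], ![0, 0, 0, 0, 0, 0, 0], ![0, 0, 0, 0, 0, 0, 0], ![0, 0, 0, 0, 0, 0, 1], ![0, 0, 0, 0, 0, 1, 0], ![0, 0, 0, 0, -1, 0, 0], ![0, 0, 0, -1, 0, 0, 0]], ![![0, 0, 0, 0, 0, 0, 0], ![0, 0, 0, 0, 0, 0, 0], ![0, 0, 0, 0, 0, 0, 0], ![0, 0, 0, 0, 0, 0, 0], ![0, 0, 0, 0, 0, 0, 0], ![0, 0, 0, 0, 0, 0, 0], ![0, 0, 0, 0, 0, 0, 0]], ![![0, 0, 0, 0, 0, 0, 0], ![0, 0, 0, 0, 0, 0, 0], ![0, 0, 0, 0, 0, 0, 0], ![0, 0, 0, 0, 1, 0, 0], ![0, 0, 0, -1, 0, 0, 0], ![0, 0, 0, 0, 0, 0, 1], ![0, 0, 0, 0, 0, -1, 0]], ![![0, 0, 0, 0, 0, 0, -1], ![0, 0, 0,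 0, 0, 0, 0], ![0, 0, 0, 0, -1, 0, 0], ![0, 0, 0, 0, 0, 0, 0], ![0, 0, 1, 0, 0, 0, 0], ![0, 0, 0, 0, 0, 0, 0], ![1, 0, 0, 0, 0, 0, 0]], ![![0, 0, 0, 0, 0, -1, 0], ![0, 0, 0, 0, 0, 0, 0], ![0, 0, 0, 1, 0, 0, 0], ![0, 0, -1, 0, 0, 0, 0], ![0, 0, 0, 0, 0, 0, 0], ![1, 0, 0, 0, 0, 0, 0], ![0, 0, 0, 0, 0, 0, 0]], ![![0, 0, 0, 0, 1, 0, 0], ![0, 0, 0, 0, 0, 0, 0], ![0, 0, 0, 0, 0, 0, -1], ![0, 0, 0, 0, 0, 0, 0], ![-1, 0, 0, 0, 0, 0, 0], ![0, 0, 0, 0, 0, 0, 0], ![0, 0, 1, 0, 0, 0, 0]], ![![0, 0, 0, 1, 0, 0, 0], ![0, 0, 0, 0, 0, 0, 0], ![0, 0, 0, 0, 0, 1, 0], ![-1, 0, 0, 0, 0, 0, 0], ![0, 0, 0, 0, 0, 0, 0], ![0, 0, -1, 0, 0, 0, 0], ![0, 0, 0, 0, 0, 0, 0]]], ![![![0,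 0, 0, 0, 0, 0, 0], ![0, 0, 0, 0, 0, 0, 0], ![0, 0, 0, 0, 0, 0, 0], ![0, 0, 0, 0, 0, 1, 0], ![0, 0, 0, 0, 0, 0, -1], ![0, 0, 0, -1, 0, 0, 0], ![0, 0, 0, 0, 1, 0, 0]], ![![0, 0, 0, 0, 0, 0, 0], ![0, 0, 0, 0, 0, 0, 0], ![0, 0, 0, 0, 0, 0, 0], ![0, 0, 0, 0, -1, 0, 0], ![0, 0, 0, 1, 0, 0, 0], ![0, 0, 0, 0, 0, 0, -1], ![0, 0, 0, 0, 0, 1, 0]], ![![0, 0, 0, 0, 0, 0, 0], ![0, 0, 0, 0, 0, 0, 0], ![0, 0, 0, 0, 0, 0, 0], ![0, 0, 0, 0, 0, 0, 0], ![0, 0, 0, 0, 0, 0, 0], ![0, 0, 0, 0, 0, 0, 0], ![0, 0, 0, 0, 0, 0, 0]], ![![0, 0, 0, 0, 0, -1, 0], ![0, 0, 0, 0, 1, 0, 0], ![0, 0, 0, 0, 0, 0, 0], ![0, 0, 0, 0, 0, 0, 0], ![0, -1, 0, 0, 0, 0, 0], ![1, 0, 0, 0, 0, 0, 0], ![0,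 0, 0, 0, 0, 0, 0]], ![![0, 0, 0, 0, 0, 0, 1], ![0, 0, 0, -1, 0, 0, 0], ![0, 0, 0, 0, 0, 0, 0], ![0, 1, 0, 0, 0, 0, 0], ![0, 0, 0, 0, 0, 0, 0], ![0, 0, 0, 0, 0, 0, 0], ![-1, 0, 0, 0, 0, 0, 0]], ![![0, 0, 0, 1, 0, 0, 0], ![0, 0, 0, 0, 0, 0, 1], ![0, 0, 0, 0, 0, 0, 0], ![-1, 0, 0, 0, 0, 0, 0], ![0, 0, 0, 0, 0, 0, 0], ![0, 0, 0, 0, 0, 0, 0], ![0, -1, 0, 0, 0, 0, 0]], ![![0, 0, 0, 0, -1, 0, 0], ![0, 0, 0, 0, 0, -1, 0], ![0, 0, 0, 0, 0, 0, 0], ![0, 0, 0, 0, 0, 0, 0], ![1, 0, 0, 0, 0, 0, 0], ![0, 1, 0, 0, 0, 0, 0], ![0, 0, 0, 0, 0, 0, 0]]], ![![![0, 0, 0, 0, 0, 0, 0], ![0, 0, 0, 0, 0, 0, -1], ![0, 0, 0, 0, 0, -1, 0], ![0, 0, 0, 0, 0, 0, 0], ![0, 0, 0, 0, 0, 0, 0],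 ![0, 0, 1, 0, 0, 0, 0], ![0, 1, 0, 0, 0, 0, 0]], ![![0, 0, 0, 0, 0, 0, 1], ![0, 0, 0, 0, 0, 0, 0], ![0, 0, 0, 0, 1, 0, 0], ![0, 0, 0, 0, 0, 0, 0], ![0, 0, -1, 0, 0, 0, 0], ![0, 0, 0, 0, 0, 0, 0], ![-1, 0, 0, 0, 0, 0, 0]], ![![0, 0, 0, 0, 0, 1, 0], ![0, 0, 0, 0, -1, 0, 0], ![0, 0, 0, 0, 0, 0, 0], ![0, 0, 0, 0, 0, 0, 0], ![0, 1, 0, 0, 0, 0, 0], ![-1, 0, 0, 0, 0, 0, 0], ![0, 0, 0, 0, 0, 0, 0]], ![![0, 0, 0, 0, 0, 0, 0], ![0, 0, 0, 0, 0, 0, 0], ![0, 0, 0, 0, 0, 0, 0], ![0, 0, 0, 0, 0, 0, 0], ![0, 0, 0, 0, 0, 0, 0], ![0, 0, 0, 0, 0, 0, 0], ![0, 0, 0, 0, 0, 0, 0]], ![![0, 0, 0, 0, 0, 0, 0], ![0, 0, 1, 0, 0, 0, 0], ![0, -1, 0, 0, 0, 0, 0], ![0, 0, 0, 0, 0, 0,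 0], ![0, 0, 0, 0, 0, 0, 0], ![0, 0, 0, 0, 0, 0, 1], ![0, 0, 0, 0, 0, -1, 0]], ![![0, 0, -1, 0, 0, 0, 0], ![0, 0, 0, 0, 0, 0, 0], ![1, 0, 0, 0, 0, 0, 0], ![0, 0, 0, 0, 0, 0, 0], ![0, 0, 0, 0, 0, 0, -1], ![0, 0, 0, 0, 0, 0, 0], ![0, 0, 0, 0, 1, 0, 0]], ![![0, -1, 0, 0, 0, 0, 0], ![1, 0, 0, 0, 0, 0, 0], ![0, 0, 0, 0, 0, 0, 0], ![0, 0, 0, 0, 0, 0, 0], ![0, 0, 0, 0, 0, 1, 0], ![0, 0, 0, 0, -1, 0, 0], ![0, 0, 0, 0, 0, 0, 0]]], ![![![0, 0, 0, 0, 0, 0, 0], ![0, 0, 0, 0, 0, -1, 0], ![0, 0, 0, 0, 0, 0, 1], ![0, 0, 0, 0, 0, 0, 0], ![0, 0, 0, 0, 0, 0, 0], ![0, 1, 0, 0, 0, 0, 0], ![0, 0, -1, 0, 0, 0, 0]], ![![0, 0, 0, 0, 0, 1, 0], ![0, 0, 0, 0, 0, 0, 0], ![0, 0, 0, -1, 0,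 0, 0], ![0, 0, 1, 0, 0, 0, 0], ![0, 0, 0, 0, 0, 0, 0], ![-1, 0, 0, 0, 0, 0, 0], ![0, 0, 0, 0, 0, 0, 0]], ![![0, 0, 0, 0, 0, 0, -1], ![0, 0, 0, 1, 0, 0, 0], ![0, 0, 0, 0, 0, 0, 0], ![0, -1, 0, 0, 0, 0, 0], ![0, 0, 0, 0, 0, 0, 0], ![0, 0, 0, 0, 0, 0, 0], ![1, 0, 0, 0, 0, 0, 0]], ![![0, 0, 0, 0, 0, 0, 0], ![0, 0, -1, 0, 0, 0, 0], ![0, 1, 0, 0, 0, 0, 0], ![0, 0, 0, 0, 0, 0, 0], ![0, 0, 0, 0, 0, 0, 0], ![0, 0, 0, 0, 0, 0, -1], ![0, 0, 0, 0, 0, 1, 0]], ![![0, 0, 0, 0, 0, 0, 0], ![0, 0, 0, 0, 0, 0, 0], ![0, 0, 0, 0, 0, 0, 0], ![0, 0, 0, 0, 0, 0, 0], ![0, 0, 0, 0, 0, 0, 0], ![0, 0, 0, 0, 0, 0, 0], ![0, 0, 0, 0, 0, 0, 0]], ![![0, -1, 0, 0, 0, 0, 0], ![1, 0, 0, 0,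 0, 0, 0], ![0, 0, 0, 0, 0, 0, 0], ![0, 0, 0, 0, 0, 0, 1], ![0, 0, 0, 0, 0, 0, 0], ![0, 0, 0, 0, 0, 0, 0], ![0, 0, 0, -1, 0, 0, 0]], ![![0, 0, 1, 0, 0, 0, 0], ![0, 0, 0, 0, 0, 0, 0], ![-1, 0, 0, 0, 0, 0, 0], ![0, 0, 0, 0, 0, -1, 0], ![0, 0, 0, 0, 0, 0, 0], ![0, 0, 0, 1, 0, 0, 0], ![0, 0, 0, 0, 0, 0, 0]]], ![![![0, 0, 0, 0, 0, 0, 0], ![0, 0, 0, 0, 1, 0, 0], ![0, 0, 0, 1, 0, 0, 0], ![0, 0, -1, 0, 0, 0, 0], ![0, -1, 0, 0, 0, 0, 0], ![0, 0, 0, 0, 0, 0, 0], ![0, 0, 0, 0, 0, 0, 0]], ![![0, 0, 0, 0, -1, 0, 0], ![0, 0, 0, 0, 0, 0, 0], ![0, 0, 0, 0, 0, 0, 1], ![0, 0, 0, 0, 0, 0, 0], ![1, 0, 0, 0, 0, 0, 0], ![0, 0, 0, 0, 0, 0, 0], ![0, 0, -1, 0, 0, 0, 0]], ![![0, 0, 0,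 -1, 0, 0, 0], ![0, 0, 0, 0, 0, 0, -1], ![0, 0, 0, 0, 0, 0, 0], ![1, 0, 0, 0, 0, 0, 0], ![0, 0, 0, 0, 0, 0, 0], ![0, 0, 0, 0, 0, 0, 0], ![0, 1, 0, 0, 0, 0, 0]], ![![0, 0, 1, 0, 0, 0, 0], ![0, 0, 0, 0, 0, 0, 0], ![-1, 0, 0, 0, 0, 0, 0], ![0, 0, 0, 0, 0, 0, 0], ![0, 0, 0, 0, 0, 0, 1], ![0, 0, 0, 0, 0, 0, 0], ![0, 0, 0, 0, -1, 0, 0]], ![![0, 1, 0, 0, 0, 0, 0], ![-1, 0, 0, 0, 0, 0, 0], ![0, 0, 0, 0, 0, 0, 0], ![0, 0, 0, 0, 0, 0, -1], ![0, 0, 0, 0, 0, 0, 0], ![0, 0, 0, 0, 0, 0, 0], ![0, 0, 0, 1, 0, 0, 0]], ![![0, 0, 0, 0, 0, 0, 0], ![0, 0, 0, 0, 0, 0, 0], ![0, 0, 0, 0, 0, 0, 0], ![0, 0, 0, 0, 0, 0, 0], ![0, 0, 0, 0, 0, 0, 0], ![0, 0, 0, 0, 0, 0, 0], ![0, 0,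 0, 0, 0, 0, 0]], ![![0, 0, 0, 0, 0, 0, 0], ![0, 0, 1, 0, 0, 0, 0], ![0, -1, 0, 0, 0, 0, 0], ![0, 0, 0, 0, 1, 0, 0], ![0, 0, 0, -1, 0, 0, 0], ![0, 0, 0, 0, 0, 0, 0], ![0, 0, 0, 0, 0, 0, 0]]], ![![![0, 0, 0, 0, 0, 0, 0], ![0, 0, 0, 1, 0, 0, 0], ![0, 0, 0, 0, -1, 0, 0], ![0, -1, 0, 0, 0, 0, 0], ![0, 0, 1, 0, 0, 0, 0], ![0, 0, 0, 0, 0, 0, 0], ![0, 0, 0, 0, 0, 0, 0]], ![![0, 0, 0, -1, 0, 0, 0], ![0, 0, 0, 0, 0, 0, 0], ![0, 0, 0, 0, 0, -1, 0], ![1, 0, 0, 0, 0, 0, 0], ![0, 0, 0, 0, 0, 0, 0], ![0, 0, 1, 0, 0, 0, 0], ![0, 0, 0, 0, 0, 0, 0]], ![![0, 0, 0, 0, 1, 0, 0], ![0, 0, 0, 0, 0, 1, 0], ![0, 0, 0, 0, 0, 0, 0], ![0, 0, 0, 0, 0, 0, 0], ![-1, 0, 0, 0, 0, 0, 0], ![0,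 -1, 0, 0, 0, 0, 0], ![0, 0, 0, 0, 0, 0, 0]], ![![0, 1, 0, 0, 0, 0, 0], ![-1, 0, 0, 0, 0, 0, 0], ![0, 0, 0, 0, 0, 0, 0], ![0, 0, 0, 0, 0, 0, 0], ![0, 0, 0, 0, 0, -1, 0], ![0, 0, 0, 0, 1, 0, 0], ![0, 0, 0, 0, 0, 0, 0]], ![![0, 0, -1, 0, 0, 0, 0], ![0, 0, 0, 0, 0, 0, 0], ![1, 0, 0, 0, 0, 0, 0], ![0, 0, 0, 0, 0, 1, 0], ![0, 0, 0, 0, 0, 0, 0], ![0, 0, 0, -1, 0, 0, 0], ![0, 0, 0, 0, 0, 0, 0]], ![![0, 0, 0, 0, 0, 0, 0], ![0, 0, -1, 0, 0, 0, 0], ![0, 1, 0, 0, 0, 0, 0], ![0, 0, 0, 0, -1, 0, 0], ![0, 0, 0, 1, 0, 0, 0], ![0, 0, 0, 0, 0, 0, 0], ![0, 0, 0, 0, 0, 0, 0]], ![![0, 0, 0, 0, 0, 0, 0], ![0, 0, 0, 0, 0, 0, 0], ![0, 0, 0, 0, 0, 0, 0], ![0, 0, 0, 0, 0, 0, 0],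 ![0, 0, 0, 0, 0, 0, 0], ![0, 0, 0, 0, 0, 0, 0], ![0, 0, 0, 0, 0, 0, 0]]]]

def pσ4 (i : Fin 4) (j : Fin 3) (k : Fin 2) : Equiv.Perm (Fin 4) :=
  Equiv.Perm.decomposeFin.symm (i, Equiv.Perm.decomposeFin.symm (j, Equiv.Perm.decomposeFin.symm (k, 1)))

def pσ3 (j : Fin 3) (k : Fin 2) : Equiv.Perm (Fin 3) :=
  Equiv.Perm.decomposeFin.symm (j, Equiv.Perm.decomposeFin.symm (k, 1))

lemma s4_000 : ((Equiv.Perm.sign (pσ4 0 0 0) : ℤˣ) : ℤ) = 1 := by decide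
lemma a4_000_0 : pσ4 0 0 0 0 = 0 := by decide
lemma a4_000_1 : pσ4 0 0 0 1 = 1 := by decide
lemma a4_000_2 : pσ4 0 0 0 2 = 2 := by decide
lemma a4_000_3 : pσ4 0 0 0 3 = 3 := by decide
lemma s4_001 : ((Equiv.Perm.sign (pσ4 0 0 1) : ℤˣ) : ℤ) = -1 := by decide
lemma a4_001_0 : pσ4 0 0 1 0 = 0 := by decide
lemma a4_001_1 : pσ4 0 0 1 1 = 1 := by decide
lemma a4_001_2 : pσ4 0 0 1 2 = 3 := by decide
lemma a4_001_3 : pσ4 0 0 1 3 = 2 := by decide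
lemma s4_010 : ((Equiv.Perm.sign (pσ4 0 1 0) : ℤˣ) : ℤ) = -1 := by decide
lemma a4_010_0 : pσ4 0 1 0 0 = 0 := by decide
lemma a4_010_1 : pσ4 0 1 0 1 = 2 := by decide
lemma a4_010_2 : pσ4 0 1 0 2 = 1 := by decide
lemma a4_010_3 : pσ4 0 1 0 3 = 3 := by decide
lemma s4_011 : ((Equiv.Perm.sign (pσ4 0 1 1) : ℤˣ) : ℤ) = 1 := by decide
lemma a4_011_0 : pσ4 0 1 1 0 = 0 := by decide
lemma a4_011_1 : pσ4 0 1 1 1 = 2 := by decide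
lemma a4_011_2 : pσ4 0 1 1 2 = 3 := by decide
lemma a4_011_3 : pσ4 0 1 1 3 = 1 := by decide
lemma s4_020 : ((Equiv.Perm.sign (pσ4 0 2 0) : ℤˣ) : ℤ) = -1 := by decide
lemma a4_020_0 : pσ4 0 2 0 0 = 0 := by decide
lemma a4_020_1 : pσ4 0 2 0 1 = 3 := by decide
lemma a4_020_2 : pσ4 0 2 0 2 = 2 := by decide
lemma a4_020_3 : pσ4 0 2 0 3 = 1 := by decide
lemma s4_021 : ((Equiv.Perm.sign (pσ4 0 2 1) : ℤˣ) : ℤ) = 1 := by decide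
lemma a4_021_0 : pσ4 0 2 1 0 = 0 := by decide
lemma a4_021_1 : pσ4 0 2 1 1 = 3 := by decide
lemma a4_021_2 : pσ4 0 2 1 2 = 1 := by decide
lemma a4_021_3 : pσ4 0 2 1 3 = 2 := by decide
lemma s4_100 : ((Equiv.Perm.sign (pσ4 1 0 0) : ℤˣ) : ℤ) = -1 := by decide
lemma a4_100_0 : pσ4 1 0 0 0 = 1 := by decide
lemma a4_100_1 : pσ4 1 0 0 1 = 0 := by decide
lemma a4_100_2 : pσ4 1 0 0 2 = 2 := by decide
lemma a4_100_3 : pσ4 1 0 0 3 = 3 := by decide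
lemma s4_101 : ((Equiv.Perm.sign (pσ4 1 0 1) : ℤˣ) : ℤ) = 1 := by decide
lemma a4_101_0 : pσ4 1 0 1 0 = 1 := by decide
lemma a4_101_1 : pσ4 1 0 1 1 = 0 := by decide
lemma a4_101_2 : pσ4 1 0 1 2 = 3 := by decide
lemma a4_101_3 : pσ4 1 0 1 3 = 2 := by decide
lemma s4_110 : ((Equiv.Perm.sign (pσ4 1 1 0) : ℤˣ) : ℤ) = 1 := by decide
lemma a4_110_0 : pσ4 1 1 0 0 = 1 := by decide
lemma a4_110_1 : pσ4 1 1 0 1 = 2 := by decide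
lemma a4_110_2 : pσ4 1 1 0 2 = 0 := by decide
lemma a4_110_3 : pσ4 1 1 0 3 = 3 := by decide
lemma s4_111 : ((Equiv.Perm.sign (pσ4 1 1 1) : ℤˣ) : ℤ) = -1 := by decide
lemma a4_111_0 : pσ4 1 1 1 0 = 1 := by decide
lemma a4_111_1 : pσ4 1 1 1 1 = 2 := by decide
lemma a4_111_2 : pσ4 1 1 1 2 = 3 := by decide
lemma a4_111_3 : pσ4 1 1 1 3 = 0 := by decide
lemma s4_120 : ((Equiv.Perm.sign (pσ4 1 2 0) : ℤˣ) : ℤ) = 1 := by decide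
lemma a4_120_0 : pσ4 1 2 0 0 = 1 := by decide
lemma a4_120_1 : pσ4 1 2 0 1 = 3 := by decide
lemma a4_120_2 : pσ4 1 2 0 2 = 2 := by decide
lemma a4_120_3 : pσ4 1 2 0 3 = 0 := by decide
lemma s4_121 : ((Equiv.Perm.sign (pσ4 1 2 1) : ℤˣ) : ℤ) = -1 := by decide
lemma a4_121_0 : pσ4 1 2 1 0 = 1 := by decide
lemma a4_121_1 : pσ4 1 2 1 1 = 3 := by decide
lemma a4_121_2 : pσ4 1 2 1 2 = 0 := by decide
lemma a4_121_3 : pσ4 1 2 1 3 = 2 := by decide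
lemma s4_200 : ((Equiv.Perm.sign (pσ4 2 0 0) : ℤˣ) : ℤ) = -1 := by decide
lemma a4_200_0 : pσ4 2 0 0 0 = 2 := by decide
lemma a4_200_1 : pσ4 2 0 0 1 = 1 := by decide
lemma a4_200_2 : pσ4 2 0 0 2 = 0 := by decide
lemma a4_200_3 : pσ4 2 0 0 3 = 3 := by decide
lemma s4_201 : ((Equiv.Perm.sign (pσ4 2 0 1) : ℤˣ) : ℤ) = 1 := by decide
lemma a4_201_0 : pσ4 2 0 1 0 = 2 := by decide
lemma a4_201_1 : pσ4 2 0 1 1 = 1 := by decide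
lemma a4_201_2 : pσ4 2 0 1 2 = 3 := by decide
lemma a4_201_3 : pσ4 2 0 1 3 = 0 := by decide
lemma s4_210 : ((Equiv.Perm.sign (pσ4 2 1 0) : ℤˣ) : ℤ) = 1 := by decide
lemma a4_210_0 : pσ4 2 1 0 0 = 2 := by decide
lemma a4_210_1 : pσ4 2 1 0 1 = 0 := by decide
lemma a4_210_2 : pσ4 2 1 0 2 = 1 := by decide
lemma a4_210_3 : pσ4 2 1 0 3 = 3 := by decide
lemma s4_211 : ((Equiv.Perm.sign (pσ4 2 1 1) : ℤˣ) : ℤ) = -1 := by decide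
lemma a4_211_0 : pσ4 2 1 1 0 = 2 := by decide
lemma a4_211_1 : pσ4 2 1 1 1 = 0 := by decide
lemma a4_211_2 : pσ4 2 1 1 2 = 3 := by decide
lemma a4_211_3 : pσ4 2 1 1 3 = 1 := by decide
lemma s4_220 : ((Equiv.Perm.sign (pσ4 2 2 0) : ℤˣ) : ℤ) = 1 := by decide
lemma a4_220_0 : pσ4 2 2 0 0 = 2 := by decide
lemma a4_220_1 : pσ4 2 2 0 1 = 3 := by decide
lemma a4_220_2 : pσ4 2 2 0 2 = 0 := by decide
lemma a4_220_3 : pσ4 2 2 0 3 = 1 := by decide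
lemma s4_221 : ((Equiv.Perm.sign (pσ4 2 2 1) : ℤˣ) : ℤ) = -1 := by decide
lemma a4_221_0 : pσ4 2 2 1 0 = 2 := by decide
lemma a4_221_1 : pσ4 2 2 1 1 = 3 := by decide
lemma a4_221_2 : pσ4 2 2 1 2 = 1 := by decide
lemma a4_221_3 : pσ4 2 2 1 3 = 0 := by decide
lemma s4_300 : ((Equiv.Perm.sign (pσ4 3 0 0) : ℤˣ) : ℤ) = -1 := by decide
lemma a4_300_0 : pσ4 3 0 0 0 = 3 := by decide
lemma a4_300_1 : pσ4 3 0 0 1 = 1 := by decide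
lemma a4_300_2 : pσ4 3 0 0 2 = 2 := by decide
lemma a4_300_3 : pσ4 3 0 0 3 = 0 := by decide
lemma s4_301 : ((Equiv.Perm.sign (pσ4 3 0 1) : ℤˣ) : ℤ) = 1 := by decide
lemma a4_301_0 : pσ4 3 0 1 0 = 3 := by decide
lemma a4_301_1 : pσ4 3 0 1 1 = 1 := by decide
lemma a4_301_2 : pσ4 3 0 1 2 = 0 := by decide
lemma a4_301_3 : pσ4 3 0 1 3 = 2 := by decide
lemma s4_310 : ((Equiv.Perm.sign (pσ4 3 1 0) : ℤˣ) : ℤ) = 1 := by decide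
lemma a4_310_0 : pσ4 3 1 0 0 = 3 := by decide
lemma a4_310_1 : pσ4 3 1 0 1 = 2 := by decide
lemma a4_310_2 : pσ4 3 1 0 2 = 1 := by decide
lemma a4_310_3 : pσ4 3 1 0 3 = 0 := by decide
lemma s4_311 : ((Equiv.Perm.sign (pσ4 3 1 1) : ℤˣ) : ℤ) = -1 := by decide
lemma a4_311_0 : pσ4 3 1 1 0 = 3 := by decide
lemma a4_311_1 : pσ4 3 1 1 1 = 2 := by decide
lemma a4_311_2 : pσ4 3 1 1 2 = 0 := by decide
lemma a4_311_3 : pσ4 3 1 1 3 = 1 := by decide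
lemma s4_320 : ((Equiv.Perm.sign (pσ4 3 2 0) : ℤˣ) : ℤ) = 1 := by decide
lemma a4_320_0 : pσ4 3 2 0 0 = 3 := by decide
lemma a4_320_1 : pσ4 3 2 0 1 = 0 := by decide
lemma a4_320_2 : pσ4 3 2 0 2 = 2 := by decide
lemma a4_320_3 : pσ4 3 2 0 3 = 1 := by decide
lemma s4_321 : ((Equiv.Perm.sign (pσ4 3 2 1) : ℤˣ) : ℤ) = -1 := by decide
lemma a4_321_0 : pσ4 3 2 1 0 = 3 := by decide
lemma a4_321_1 : pσ4 3 2 1 1 = 0 := by decide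
lemma a4_321_2 : pσ4 3 2 1 2 = 1 := by decide
lemma a4_321_3 : pσ4 3 2 1 3 = 2 := by decide
lemma s3_00 : ((Equiv.Perm.sign (pσ3 0 0) : ℤˣ) : ℤ) = 1 := by decide
lemma a3_00_0 : pσ3 0 0 0 = 0 := by decide
lemma a3_00_1 : pσ3 0 0 1 = 1 := by decide
lemma a3_00_2 : pσ3 0 0 2 = 2 := by decide
lemma s3_01 : ((Equiv.Perm.sign (pσ3 0 1) : ℤˣ) : ℤ) = -1 := by decide
lemma a3_01_0 : pσ3 0 1 0 = 0 := by decide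
lemma a3_01_1 : pσ3 0 1 1 = 2 := by decide
lemma a3_01_2 : pσ3 0 1 2 = 1 := by decide
lemma s3_10 : ((Equiv.Perm.sign (pσ3 1 0) : ℤˣ) : ℤ) = -1 := by decide
lemma a3_10_0 : pσ3 1 0 0 = 1 := by decide
lemma a3_10_1 : pσ3 1 0 1 = 0 := by decide
lemma a3_10_2 : pσ3 1 0 2 = 2 := by decide
lemma s3_11 : ((Equiv.Perm.sign (pσ3 1 1) : ℤˣ) : ℤ) = 1 := by decide
lemma a3_11_0 : pσ3 1 1 0 = 1 := by decide
lemma a3_11_1 : pσ3 1 1 1 = 2 := by decide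
lemma a3_11_2 : pσ3 1 1 2 = 0 := by decide
lemma s3_20 : ((Equiv.Perm.sign (pσ3 2 0) : ℤˣ) : ℤ) = -1 := by decide
lemma a3_20_0 : pσ3 2 0 0 = 2 := by decide
lemma a3_20_1 : pσ3 2 0 1 = 1 := by decide
lemma a3_20_2 : pσ3 2 0 2 = 0 := by decide
lemma s3_21 : ((Equiv.Perm.sign (pσ3 2 1) : ℤˣ) : ℤ) = 1 := by decide
lemma a3_21_0 : pσ3 2 1 0 = 2 := by decide
lemma a3_21_1 : pσ3 2 1 1 = 0 := by decide
lemma a3_21_2 : pσ3 2 1 2 = 1 := by decide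

def psiE (x0 x1 x2 x3 : Fin 7) : ℤ :=
  (1 : ℤ) * psi0Z x0 x1 x2 x3 + (-1 : ℤ) * psi0Z x0 x1 x3 x2 + (-1 : ℤ) * psi0Z x0 x2 x1 x3 + (1 : ℤ) * psi0Z x0 x2 x3 x1 + (-1 : ℤ) * psi0Z x0 x3 x2 x1 + (1 : ℤ) * psi0Z x0 x3 x1 x2 + (-1 : ℤ) * psi0Z x1 x0 x2 x3 + (1 : ℤ) * psi0Z x1 x0 x3 x2 + (1 : ℤ) * psi0Z x1 x2 x0 x3 + (-1 : ℤ) * psi0Z x1 x2 x3 x0 + (1 : ℤ) * psi0Z x1 x3 x2 x0 + (-1 : ℤ) * psi0Z x1 x3 x0 x2 + (-1 : ℤ) * psi0Z x2 x1 x0 x3 + (1 : ℤ) * psi0Z x2 x1 x3 x0 + (1 : ℤ) * psi0Z x2 x0 x1 x3 + (-1 : ℤ) * psi0Z x2 x0 x3 x1 + (1 : ℤ) * psi0Z x2 x3 x0 x1 + (-1 : ℤ) * psi0Z x2 x3 x1 x0 + (-1 : ℤ) * psi0Z x3 x1 x2 x0 + (1 : ℤ) * psi0Z x3 x1 x0 x2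 + (1 : ℤ) * psi0Z x3 x2 x1 x0 + (-1 : ℤ) * psi0Z x3 x2 x0 x1 + (1 : ℤ) * psi0Z x3 x0 x2 x1 + (-1 : ℤ) * psi0Z x3 x0 x1 x2

def phiE (x0 x1 x2 : Fin 7) : ℤ :=
  (1 : ℤ) * phi0Z x0 x1 x2 + (-1 : ℤ) * phi0Z x0 x2 x1 + (-1 : ℤ) * phi0Z x1 x0 x2 + (1 : ℤ) * phi0Z x1 x2 x0 + (-1 : ℤ) * phi0Z x2 x1 x0 + (1 : ℤ) * phi0Z x2 x0 x1

lemma perm4_sum {M : Type*} [AddCommMonoid M] (g : Equiv.Perm (Fin 4) → M) :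
    ∑ σ : Equiv.Perm (Fin 4), g σ = ∑ i : Fin 4, ∑ j : Fin 3, ∑ k : Fin 2, g (pσ4 i j k) := by
  rw [← Equiv.sum_comp (Equiv.Perm.decomposeFin.symm) g, Fintype.sum_prod_type]
  refine Finset.sum_congr rfl fun i _ => ?_
  rw [← Equiv.sum_comp (Equiv.Perm.decomposeFin.symm)
      (fun τ => g (Equiv.Perm.decomposeFin.symm (i, τ))), Fintype.sum_prod_type]
  refine Finset.sum_congr rfl fun j _ => ?_
  rw [← Equiv.sum_comp (Equiv.Perm.decomposeFin.symm)
      (fun τ => g (Equiv.Perm.decomposeFin.symm (i, Equiv.Perm.decomposeFin.symm (j, τ)))),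
    Fintype.sum_prod_type]
  refine Finset.sum_congr rfl fun k _ => ?_
  rw [Finset.sum_eq_single 1]
  · rfl
  · intro b _ hb; exact absurd (Subsingleton.elim b 1) hb
  · intro h; exact absurd (Finset.mem_univ _) h

lemma perm3_sum {M : Type*} [AddCommMonoid M] (g : Equiv.Perm (Fin 3) → M) :
    ∑ σ : Equiv.Perm (Fin 3), g σ = ∑ j : Fin 3, ∑ k : Fin 2, g (pσ3 j k) := by
  rw [← Equiv.sum_comp (Equiv.Perm.decomposeFin.symm) g, Fintype.sum_prod_type]
  refine Finset.sum_congr rfl fun j _ => ?_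
  rw [← Equiv.sum_comp (Equiv.Perm.decomposeFin.symm)
      (fun τ => g (Equiv.Perm.decomposeFin.symm (j, τ))), Fintype.sum_prod_type]
  refine Finset.sum_congr rfl fun k _ => ?_
  rw [Finset.sum_eq_single 1]
  · rfl
  · intro b _ hb; exact absurd (Subsingleton.elim b 1) hb
  · intro h; exact absurd (Finset.mem_univ _) h

lemma psiZ_expand (v : Fin 4 → Fin 7) :
    ∑ σ : Equiv.Perm (Fin 4),
      ((Equiv.Perm.sign σ : ℤˣ) : ℤ) * psi0Z (v (σ 0)) (v (σ 1)) (v (σ 2)) (v (σ 3)) =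
    psiE (v 0) (v 1) (v 2) (v 3) := by
  rw [perm4_sum (fun σ => ((Equiv.Perm.sign σ : ℤˣ) : ℤ) * psi0Z (v (σ 0)) (v (σ 1)) (v (σ 2)) (v (σ 3)))]
  simp only [Fin.sum_univ_four, Fin.sum_univ_three, Fin.sum_univ_two,
    s4_000, a4_000_0, a4_000_1, a4_000_2, a4_000_3, s4_001, a4_001_0, a4_001_1, a4_001_2, a4_001_3, s4_010, a4_010_0, a4_010_1, a4_010_2, a4_010_3, s4_011, a4_011_0, a4_011_1, a4_011_2, a4_011_3, s4_020, a4_020_0, a4_020_1, a4_020_2, a4_020_3, s4_021, a4_021_0, a4_021_1, a4_021_2, a4_021_3, s4_100, a4_100_0, a4_100_1, a4_100_2, a4_100_3, s4_101, a4_101_0, a4_101_1, a4_101_2, a4_101_3, s4_110, a4_110_0, a4_110_1, a4_110_2, a4_110_3, s4_111, a4_111_0, a4_111_1, a4_111_2, a4_111_3, s4_120, a4_120_0, a4_120_1, a4_120_2, a4_120_3, s4_121, a4_121_0, a4_121_1, a4_121_2, a4_121_3, s4_200, a4_200_0, a4_200_1, a4_200_2, a4_200_3, s4_201, a4_201_0,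 a4_201_1, a4_201_2, a4_201_3, s4_210, a4_210_0, a4_210_1, a4_210_2, a4_210_3, s4_211, a4_211_0, a4_211_1, a4_211_2, a4_211_3, s4_220, a4_220_0, a4_220_1, a4_220_2, a4_220_3, s4_221, a4_221_0, a4_221_1, a4_221_2, a4_221_3, s4_300, a4_300_0, a4_300_1, a4_300_2, a4_300_3, s4_301, a4_301_0, a4_301_1, a4_301_2, a4_301_3, s4_310, a4_310_0, a4_310_1, a4_310_2, a4_310_3, s4_311, a4_311_0, a4_311_1, a4_311_2, a4_311_3, s4_320, a4_320_0, a4_320_1, a4_320_2, a4_320_3, s4_321, a4_321_0, a4_321_1, a4_321_2, a4_321_3]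
  simp only [psiE, Matrix.cons_val_zero, Matrix.cons_val_one, Matrix.head_cons,
    Matrix.cons_val_two, Matrix.cons_val_three, Matrix.tail_cons]
  ring

lemma phiZ_expand (v : Fin 3 → Fin 7) :
    ∑ σ : Equiv.Perm (Fin 3),
      ((Equiv.Perm.sign σ : ℤˣ) : ℤ) * phi0Z (v (σ 0)) (v (σ 1)) (v (σ 2)) =
    phiE (v 0) (v 1) (v 2) := by
  rw [perm3_sum (fun σ => ((Equiv.Perm.sign σ : ℤˣ) : ℤ) * phi0Z (v (σ 0)) (v (σ 1)) (v (σ 2)))]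
  simp only [Fin.sum_univ_three, Fin.sum_univ_two,
    s3_00, a3_00_0, a3_00_1, a3_00_2, s3_01, a3_01_0, a3_01_1, a3_01_2, s3_10, a3_10_0, a3_10_1, a3_10_2, s3_11, a3_11_0, a3_11_1, a3_11_2, s3_20, a3_20_0, a3_20_1, a3_20_2, s3_21, a3_21_0, a3_21_1, a3_21_2]
  simp only [phiE, Matrix.cons_val_zero, Matrix.cons_val_one, Matrix.head_cons,
    Matrix.cons_val_two, Matrix.tail_cons]
  ring

lemma phiE_eq_phiT : ∀ a b c, phiE a b c = phiT a b c := by decide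
lemma psiE_eq_psiT : ∀ a b c d, psiE a b c d = psiT a b c d := by decide

lemma phi0_cast (x y z : Fin 7) : phi0 x y z = ((phi0Z x y z : ℤ) : ℝ) := by
  unfold phi0 phi0Z; split_ifs <;> norm_num

lemma psi0_cast (x y z w : Fin 7) : psi0 x y z w = ((psi0Z x y z w : ℤ) : ℝ) := by
  unfold psi0 psi0Z; split_ifs <;> norm_num

lemma delta_cast (x y : Fin 7) : delta x y = ((deltaZ x y : ℤ) : ℝ) := by
  unfold delta deltaZ; split_ifs <;> norm_num

lemma phi_eval (a b c : Fin 7) : phi a b c = ((phiT a b c : ℤ) : ℝ) := by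
  have h1 : phi a b c =
      ((∑ σ : Equiv.Perm (Fin 3), ((Equiv.Perm.sign σ : ℤˣ) : ℤ) *
        phi0Z (![a, b, c] (σ 0)) (![a, b, c] (σ 1)) (![a, b, c] (σ 2)) : ℤ) : ℝ) := by
    unfold phi
    push_cast
    exact Finset.sum_congr rfl fun σ _ => by rw [phi0_cast]
  rw [h1, phiZ_expand ![a, b, c]]
  simp only [Matrix.cons_val_zero, Matrix.cons_val_one, Matrix.head_cons, Matrix.cons_val_two,
    Matrix.tail_cons, phiE_eq_phiT]

lemma psi_eval (a b c d : Fin 7) : psi a b c d = ((psiT a b c d : ℤ) : ℝ) := by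
  have h1 : psi a b c d =
      ((∑ σ : Equiv.Perm (Fin 4), ((Equiv.Perm.sign σ : ℤˣ) : ℤ) *
        psi0Z (![a, b, c, d] (σ 0)) (![a, b, c, d] (σ 1)) (![a, b, c, d] (σ 2))
          (![a, b, c, d] (σ 3)) : ℤ) : ℝ) := by
    unfold psi
    push_cast
    exact Finset.sum_congr rfl fun σ _ => by rw [psi0_cast]
  rw [h1, psiZ_expand ![a, b, c, d]]
  simp only [Matrix.cons_val_zero, Matrix.cons_val_one, Matrix.head_cons, Matrix.cons_val_two,
    Matrix.cons_val_three, Matrix.tail_cons, psiE_eq_psiT]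

lemma lemA_int : ∀ c d a b : Fin 7, ∑ e : Fin 7, phiT c d e * phiT e a b =
    deltaZ c a * deltaZ d b - deltaZ c b * deltaZ d a + psiT c d a b := by decide

lemma lemB_int : ∀ e a b c : Fin 7,
    2 * ∑ d : Fin 7, phiT e d a * phiT b c d =
      (∑ d : Fin 7, phiT e d b * phiT c a d) - (∑ d : Fin 7, phiT e d c * phiT b a d) +
        3 * (deltaZ a b * deltaZ e c - deltaZ a c * deltaZ e b) := by decide

lemma lemA (c d a b : Fin 7) : ∑ e : Fin 7, phi c d e * phi e a b =
    delta c a * delta d b - delta c b * delta d a + psi c d a b := by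
  simp only [phi_eval, psi_eval, delta_cast]
  exact_mod_cast lemA_int c d a b

lemma lemB (e a b c : Fin 7) :
    2 * ∑ d : Fin 7, phi e d a * phi b c d =
      (∑ d : Fin 7, phi e d b * phi c a d) - (∑ d : Fin 7, phi e d c * phi b a d) +
        3 * (delta a b * delta e c - delta a c * delta e b) := by
  simp only [phi_eval, delta_cast]
  exact_mod_cast lemB_int e a b c

lemma sum_delta_mul (f : Fin 7 → ℝ) (x : Fin 7) : ∑ e : Fin 7, f e * delta e x = f x := by
  simp [delta, mul_ite, mul_one, mul_zero]

lemma sum_sum_delta (f : Fin 7 → Fin 7 → ℝ) (x y : Fin 7) :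
    ∑ cc : Fin 7, ∑ dd : Fin 7, f cc dd * (delta cc x * delta dd y) = f x y := by
  simp [delta, mul_ite, ite_mul, mul_one, mul_zero, zero_mul]

/-- If the antisymmetric matrix `β` lies in `Λ²₇`, i.e.
`Σ_{c,d} β_{cd} ψ_{cdab} = 4 β_{ab}`, and `ρ_e := (1/2) Σ_{c,d} β_{cd} φ_{cde}`, then
`Σ_d β_{da} φ_{bcd} = (1/2)(Σ_d β_{db} φ_{cad} − Σ_d β_{dc} φ_{bad}) + (1/2)(δ_{ab} ρ_c − δ_{ac} ρ_b)`. -/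
theorem stmt_11 (β : Fin 7 → Fin 7 → ℝ) (hskew : ∀ a b, β b a = -β a b)
    (h7 : ∀ a b : Fin 7, ∑ c : Fin 7, ∑ d : Fin 7, β c d * psi c d a b = 4 * β a b)
    (ρ : Fin 7 → ℝ)
    (hρ : ∀ e, ρ e = (1 / 2 : ℝ) * ∑ c : Fin 7, ∑ d : Fin 7, β c d * phi c d e)
    (a b c : Fin 7) :
    ∑ d : Fin 7, β d a * phi b c d =
      (1 / 2 : ℝ) * ((∑ d : Fin 7, β d b * phi c a d) - ∑ d : Fin 7, β d c * phi b a d) +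
        (1 / 2 : ℝ) * (delta a b * ρ c - delta a c * ρ b) := by
  have key : ∀ x y : Fin 7, 6 * β x y = ∑ e : Fin 7, (2 * ρ e) * phi e x y := by
    intro x y
    have step1 : ∑ e : Fin 7, (2 * ρ e) * phi e x y
        = ∑ cc : Fin 7, ∑ dd : Fin 7, β cc dd * ∑ e : Fin 7, phi cc dd e * phi e x y := by
      calc ∑ e : Fin 7, (2 * ρ e) * phi e x y
          = ∑ e : Fin 7, ∑ cc : Fin 7, ∑ dd : Fin 7, β cc dd * phi cc dd e * phi e x y := by
            refine Finset.sum_congr rfl fun e _ => ?_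
            rw [hρ e]
            rw [show (2 : ℝ) * ((1 / 2 : ℝ) * ∑ cc : Fin 7, ∑ dd : Fin 7, β cc dd * phi cc dd e) * phi e x y
                = (∑ cc : Fin 7, ∑ dd : Fin 7, β cc dd * phi cc dd e) * phi e x y from by ring]
            rw [Finset.sum_mul]
            exact Finset.sum_congr rfl fun cc _ => by rw [Finset.sum_mul]
        _ = ∑ cc : Fin 7, ∑ e : Fin 7, ∑ dd : Fin 7, β cc dd * phi cc dd e * phi e x y :=
            Finset.sum_comm
        _ = ∑ cc : Fin 7, ∑ dd : Fin 7, ∑ e : Fin 7, β cc dd * phi cc dd e * phi e x y :=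
            Finset.sum_congr rfl fun cc _ => Finset.sum_comm
        _ = ∑ cc : Fin 7, ∑ dd : Fin 7, β cc dd * ∑ e : Fin 7, phi cc dd e * phi e x y := by
            refine Finset.sum_congr rfl fun cc _ => Finset.sum_congr rfl fun dd _ => ?_
            rw [Finset.mul_sum]
            exact Finset.sum_congr rfl fun e _ => by ring
    have split : ∑ cc : Fin 7, ∑ dd : Fin 7, β cc dd * ∑ e : Fin 7, phi cc dd e * phi e x y
        = ((∑ cc : Fin 7, ∑ dd : Fin 7, β cc dd * (delta cc x * delta dd y))
            - ∑ cc : Fin 7, ∑ dd : Fin 7, β cc dd * (delta cc y * delta dd x))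
          + ∑ cc : Fin 7, ∑ dd : Fin 7, β cc dd * psi cc dd x y := by
      rw [← Finset.sum_sub_distrib, ← Finset.sum_add_distrib]
      refine Finset.sum_congr rfl fun cc _ => ?_
      rw [← Finset.sum_sub_distrib, ← Finset.sum_add_distrib]
      refine Finset.sum_congr rfl fun dd _ => ?_
      rw [lemA cc dd x y]
      ring
    rw [step1, split, sum_sum_delta β x y, sum_sum_delta β y x, h7 x y, hskew x y]
    ring
  have key' : ∀ x y : Fin 7, β x y = ∑ e : Fin 7, (ρ e / 3) * phi e x y := by
    intro x y
    have h : ∑ e : Fin 7, (ρ e / 3) * phi e x y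
        = (6 : ℝ)⁻¹ * ∑ e : Fin 7, (2 * ρ e) * phi e x y := by
      rw [Finset.mul_sum]
      exact Finset.sum_congr rfl fun e _ => by ring
    rw [h, ← key x y]
    ring
  have hsum : ∀ x y z : Fin 7, ∑ d : Fin 7, β d x * phi y z d
      = ∑ e : Fin 7, ρ e / 3 * ∑ d : Fin 7, phi e d x * phi y z d := by
    intro x y z
    calc ∑ d : Fin 7, β d x * phi y z d
        = ∑ d : Fin 7, (∑ e : Fin 7, (ρ e / 3) * phi e d x) * phi y z d :=
          Finset.sum_congr rfl fun d _ => by rw [← key' d x]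
      _ = ∑ d : Fin 7, ∑ e : Fin 7, (ρ e / 3) * phi e d x * phi y z d :=
          Finset.sum_congr rfl fun d _ => by rw [Finset.sum_mul]
      _ = ∑ e : Fin 7, ∑ d : Fin 7, (ρ e / 3) * phi e d x * phi y z d := Finset.sum_comm
      _ = ∑ e : Fin 7, ρ e / 3 * ∑ d : Fin 7, phi e d x * phi y z d := by
          refine Finset.sum_congr rfl fun e _ => ?_
          rw [Finset.mul_sum]
          exact Finset.sum_congr rfl fun d _ => by ring
  rw [hsum a b c, hsum b c a, hsum c b a,
    show ρ c = ∑ e : Fin 7, ρ e * delta e c from (sum_delta_mul ρ c).symm,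
    show ρ b = ∑ e : Fin 7, ρ e * delta e b from (sum_delta_mul ρ b).symm]
  rw [← Finset.sum_sub_distrib, Finset.mul_sum, Finset.mul_sum, Finset.mul_sum,
    ← Finset.sum_sub_distrib, Finset.mul_sum, ← Finset.sum_add_distrib]
  refine Finset.sum_congr rfl fun e _ => ?_
  linear_combination (ρ e / 6) * lemB e a b c


end
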